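/- Let n ∈ ℕ, ν > 0, C > 0, and let M : ℝ → Matrix(n,n,ℂ) be continuous with ‖M(x)‖ ≤ C⟨x⟩^{-(2+ν)} for all x ∈ ℝ. Let c : ℝ → ℂⁿ be differentiable with c′(x) = M(x) c(x) for all x. Then: (i) ‖c(x)‖ ≤ exp(∫_ℝ ‖M(y)‖ dy) · ‖c(0)‖ for all x ∈ ℝ; (ii) the limits c(±∞) := lim_{x→±∞} c(x) exist; and (iii) there is a constant C′, depending only on C, ν and ‖c(0)‖, such that ‖c(x) − c(+∞)‖ ≤ C′ ⟨x⟩^{-(1+ν)} for all x ≥ 0, and ‖c(x) − c(−∞)‖ ≤ C′ ⟨x⟩^{-(1+ν)} for all x ≤ 0. -/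

import Mathlib

/-!
Since `⟨x⟩^{-(2+ν)} ≤ (1 + x²)⁻¹`, the coefficient `‖M‖` is integrable with `∫ ‖M‖ ≤ Cπ`.
Grönwall's inequality gives (i), so `‖c‖ ≤ exp (Cπ) ‖c 0‖` and `‖c'‖ = ‖M c‖` is bounded by a
multiple of `⟨x⟩^{-(2+ν)}`. Hence `c` converges at `+∞`, and
`‖c x - c(+∞)‖ ≤ ∫ₓ^∞ ‖c'‖ = O((1 + x)^{-(1+ν)}) = O(⟨x⟩^{-(1+ν)})`.
The end `-∞` is the end `+∞` of `t ↦ c (-t)`, which solves the system with matrix `-M (-t)`.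
-/

open Filter MeasureTheory Real Set Topology Interval

theorem HasDerivAt.comp_neg {E : Type*} [NormedAddCommGroup E] [NormedSpace ℝ E] {f : ℝ → E}
    {f' : E} {x : ℝ} (hf : HasDerivAt f f' (-x)) : HasDerivAt (fun t => f (-t)) (-f') x := by
  simpa [Function.comp_def] using hf.scomp x (hasDerivAt_neg x)

section Gronwall

variable {E : Type*} [NormedAddCommGroup E] [InnerProductSpace ℝ E]
  {c c' : ℝ → E} {g : ℝ → ℝ}

theorem norm_le_exp_integral_mul_of_le (hg : Continuous g) (hc : ∀ t, HasDerivAt c (c' t) t)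
    (hbound : ∀ t, ‖c' t‖ ≤ g t * ‖c t‖) {a x : ℝ} (hax : a ≤ x) :
    ‖c x‖ ≤ exp (∫ t in a..x, g t) * ‖c a‖ := by
  set F : ℝ → ℝ := fun u => ∫ t in a..u, g t
  have hF : ∀ u, HasDerivAt F (g u) u := fun u =>
    intervalIntegral.integral_hasDerivAt_right (hg.intervalIntegrable a u)
      hg.stronglyMeasurable.stronglyMeasurableAtFilter hg.continuousAt
  -- `‖c‖²`, unlike `‖c‖`, is differentiable where `c` vanishes.
  have hφ : ∀ u, HasDerivAt (fun t => exp (-2 * F t) * ‖c t‖ ^ 2)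
      (exp (-2 * F u) * (-2 * g u) * ‖c u‖ ^ 2 + exp (-2 * F u) * (2 * inner ℝ (c u) (c' u))) u :=
    fun u => (((hF u).const_mul (-2)).exp).mul ((hc u).norm_sq)
  have hφ_nonpos : ∀ u, exp (-2 * F u) * (-2 * g u) * ‖c u‖ ^ 2
      + exp (-2 * F u) * (2 * inner ℝ (c u) (c' u)) ≤ 0 := by
    intro u
    have : inner ℝ (c u) (c' u) ≤ g u * ‖c u‖ ^ 2 := calc
      inner ℝ (c u) (c' u) ≤ ‖c u‖ * ‖c' u‖ := real_inner_le_norm _ _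
      _ ≤ ‖c u‖ * (g u * ‖c u‖) := by gcongr; exact hbound u
      _ = g u * ‖c u‖ ^ 2 := by ring
    nlinarith [exp_pos (-2 * F u)]
  have hanti : Antitone fun t => exp (-2 * F t) * ‖c t‖ ^ 2 :=
    antitone_of_deriv_nonpos (fun u => (hφ u).differentiableAt)
      (fun u => (hφ u).deriv ▸ hφ_nonpos u)
  have h : exp (-2 * F x) * ‖c x‖ ^ 2 ≤ ‖c a‖ ^ 2 := by
    simpa [F] using hanti hax
  rw [← pow_le_pow_iff_left₀ (norm_nonneg _) (by positivity) two_ne_zero]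
  calc ‖c x‖ ^ 2 = exp (2 * F x) * (exp (-2 * F x) * ‖c x‖ ^ 2) := by
        rw [← mul_assoc, ← exp_add]; simp
    _ ≤ exp (2 * F x) * ‖c a‖ ^ 2 := by gcongr
    _ = (exp (F x) * ‖c a‖) ^ 2 := by rw [mul_pow, ← exp_nat_mul]; ring_nf

theorem norm_le_exp_integral_mul_of_ge (hg : Continuous g) (hc : ∀ t, HasDerivAt c (c' t) t)
    (hbound : ∀ t, ‖c' t‖ ≤ g t * ‖c t‖) {a x : ℝ} (hxa : x ≤ a) :
    ‖c x‖ ≤ exp (∫ t in x..a, g t) * ‖c a‖ := by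
  have := norm_le_exp_integral_mul_of_le (hg.comp continuous_neg) (fun t => (hc (-t)).comp_neg)
    (fun t => by simpa using hbound (-t)) (neg_le_neg hxa)
  simpa [intervalIntegral.integral_comp_neg (fun t => g t)] using this

end Gronwall

theorem exists_tendsto_atTop_norm_sub_le_integral_Ioi {E : Type*} [NormedAddCommGroup E]
    [NormedSpace ℝ E] [CompleteSpace E] {c f : ℝ → E} {a : ℝ}
    (hc : ∀ t, HasDerivAt c (f t) t) (hf : IntegrableOn f (Ioi a)) :
    ∃ L, Tendsto c atTop (𝓝 L) ∧ ∀ x, a ≤ x → ‖c x - L‖ ≤ ∫ t in Ioi x, ‖f t‖ := by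
  have hf_interval : ∀ {x y}, a ≤ x → a ≤ y → IntervalIntegrable f volume x y := fun hx hy =>
    intervalIntegrable_iff.2 <| hf.mono_set fun _ ht => (le_min hx hy).trans_lt ht.1
  have hftc : ∀ {x y}, a ≤ x → a ≤ y → c y - c x = ∫ t in x..y, f t := fun hx hy =>
    (intervalIntegral.integral_eq_sub_of_hasDerivAt (fun t _ => hc t) (hf_interval hx hy)).symm
  have hlim : Tendsto c atTop (𝓝 (c a + ∫ t in Ioi a, f t)) := by
    refine ((intervalIntegral_tendsto_integral_Ioi a hf tendsto_id).const_add (c a)).congr' ?_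
    filter_upwards [eventually_ge_atTop a] with y hy
    rw [id, ← hftc le_rfl hy, add_sub_cancel]
  refine ⟨_, hlim, fun x hx => ?_⟩
  have hfx : IntegrableOn (fun t => ‖f t‖) (Ioi x) := (hf.mono_set (Ioi_subset_Ioi hx)).norm
  have hstep : ∀ y, x ≤ y → ‖c y - c x‖ ≤ ∫ t in Ioi x, ‖f t‖ := fun y hxy => calc
    ‖c y - c x‖ = ‖∫ t in x..y, f t‖ := by rw [hftc hx (hx.trans hxy)]
    _ ≤ ∫ t in Ι x y, ‖f t‖ := intervalIntegral.norm_integral_le_integral_norm_uIoc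
    _ ≤ ∫ t in Ioi x, ‖f t‖ := by
      rw [uIoc_of_le hxy]
      exact setIntegral_mono_set hfx (ae_of_all _ fun _ => norm_nonneg _)
        Ioc_subset_Ioi_self.eventuallyLE
  rw [norm_sub_rev]
  exact le_of_tendsto (hlim.sub_const _).norm ((eventually_ge_atTop x).mono hstep)

theorem sqrt_one_add_sq_rpow_neg_le_inv {s : ℝ} (hs : 2 ≤ s) (x : ℝ) :
    √(1 + x ^ 2) ^ (-s) ≤ (1 + x ^ 2)⁻¹ := by
  have hsq : √(1 + x ^ 2) ^ (2 : ℝ) = 1 + x ^ 2 := by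
    rw [rpow_two, sq_sqrt (by positivity)]
  rw [rpow_neg (sqrt_nonneg _)]
  refine inv_anti₀ (by positivity) ?_
  calc 1 + x ^ 2 = √(1 + x ^ 2) ^ (2 : ℝ) := hsq.symm
    _ ≤ √(1 + x ^ 2) ^ s := rpow_le_rpow_of_exponent_le (one_le_sqrt.mpr (by nlinarith)) hs

theorem sqrt_one_add_sq_rpow_neg_le {s x : ℝ} (hs : 0 ≤ s) (hx : -1 < x) :
    √(1 + x ^ 2) ^ (-s) ≤ √2 ^ s * (1 + x) ^ (-s) := by
  have hle : 1 + x ≤ √2 * √(1 + x ^ 2) := by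
    have := one_add_norm_le_sqrt_two_mul_sqrt x
    rw [norm_eq_abs, sq_abs] at this
    linarith [le_abs_self x]
  have := rpow_le_rpow_of_nonpos (by linarith) hle (neg_nonpos.mpr hs)
  rwa [mul_rpow (by positivity) (by positivity), rpow_neg (sqrt_nonneg 2),
    inv_mul_le_iff₀ (by positivity)] at this

theorem one_add_rpow_neg_le_sqrt_one_add_sq_rpow_neg {s x : ℝ} (hs : 0 ≤ s) (hx : 0 ≤ x) :
    (1 + x) ^ (-s) ≤ √(1 + x ^ 2) ^ (-s) := by
  simpa [abs_of_nonneg hx] using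
    rpow_le_rpow_of_nonpos (by positivity) (sqrt_one_add_norm_sq_le x) (neg_nonpos.mpr hs)

theorem hasDerivAt_one_add_rpow_neg {ν x : ℝ} (hν : ν ≠ -1) (hx : -1 < x) :
    HasDerivAt (fun u => -(1 + u) ^ (-(1 + ν)) / (1 + ν)) ((1 + x) ^ (-(2 + ν))) x := by
  have h1 : 1 + ν ≠ 0 := fun h => hν (by linarith)
  have h := ((hasDerivAt_id x).const_add 1).rpow_const (p := -(1 + ν))
    (Or.inl (by simp only [id]; linarith))
  refine (h.neg.div_const (1 + ν)).congr_deriv ?_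
  rw [show -(1 + ν) - 1 = -(2 + ν) by ring]
  field_simp
  simp

theorem tendsto_one_add_rpow_neg_atTop {ν : ℝ} (hν : -1 < ν) :
    Tendsto (fun u : ℝ => -(1 + u) ^ (-(1 + ν)) / (1 + ν)) atTop (𝓝 0) := by
  have := ((tendsto_rpow_neg_atTop (by linarith : 0 < 1 + ν)).comp
    (tendsto_atTop_add_const_left atTop 1 tendsto_id)).neg.div_const (1 + ν)
  simpa using this

theorem integrableOn_Ioi_one_add_rpow_neg {ν x : ℝ} (hν : -1 < ν) (hx : -1 < x) :
    IntegrableOn (fun t => (1 + t) ^ (-(2 + ν))) (Ioi x) :=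
  integrableOn_Ioi_deriv_of_nonneg'
    (fun t ht => hasDerivAt_one_add_rpow_neg hν.ne' (hx.trans_le ht))
    (fun t ht => rpow_nonneg (by linarith [mem_Ioi.mp ht]) _) (tendsto_one_add_rpow_neg_atTop hν)

theorem integral_Ioi_one_add_rpow_neg {ν x : ℝ} (hν : -1 < ν) (hx : -1 < x) :
    ∫ t in Ioi x, (1 + t) ^ (-(2 + ν)) = (1 + x) ^ (-(1 + ν)) / (1 + ν) := by
  rw [integral_Ioi_of_hasDerivAt_of_nonneg'
    (fun t ht => hasDerivAt_one_add_rpow_neg hν.ne' (hx.trans_le ht))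
    (fun t ht => rpow_nonneg (by linarith [mem_Ioi.mp ht]) _) (tendsto_one_add_rpow_neg_atTop hν)]
  ring

theorem integral_Ioi_sqrt_one_add_sq_rpow_neg_le {ν x : ℝ} (hν : -1 < ν) (hx : 0 ≤ x) :
    ∫ t in Ioi x, √(1 + t ^ 2) ^ (-(2 + ν)) ≤
      √2 ^ (2 + ν) / (1 + ν) * √(1 + x ^ 2) ^ (-(1 + ν)) := by
  have hbound : ∀ t ∈ Ioi x, √(1 + t ^ 2) ^ (-(2 + ν)) ≤ √2 ^ (2 + ν) * (1 + t) ^ (-(2 + ν)) :=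
    fun t ht => sqrt_one_add_sq_rpow_neg_le (by linarith) (by linarith [mem_Ioi.mp ht])
  have hint :=
    (integrableOn_Ioi_one_add_rpow_neg hν (by linarith : -1 < x)).const_mul (√2 ^ (2 + ν))
  calc ∫ t in Ioi x, √(1 + t ^ 2) ^ (-(2 + ν))
      ≤ ∫ t in Ioi x, √2 ^ (2 + ν) * (1 + t) ^ (-(2 + ν)) := by
        refine setIntegral_mono_on ?_ hint measurableSet_Ioi hbound
        refine hint.mono' (by fun_prop : Measurable _).aestronglyMeasurable
          (ae_restrict_of_forall_mem measurableSet_Ioi fun t ht => ?_)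
        rw [norm_of_nonneg (by positivity)]
        exact hbound t ht
    _ = √2 ^ (2 + ν) / (1 + ν) * (1 + x) ^ (-(1 + ν)) := by
        rw [integral_const_mul, integral_Ioi_one_add_rpow_neg hν (by linarith)]; ring
    _ ≤ √2 ^ (2 + ν) / (1 + ν) * √(1 + x ^ 2) ^ (-(1 + ν)) := by
        refine mul_le_mul_of_nonneg_left ?_ (div_nonneg (by positivity) (by linarith))
        exact one_add_rpow_neg_le_sqrt_one_add_sq_rpow_neg (by linarith) hx

theorem integrable_sqrt_one_add_sq_rpow_neg {s : ℝ} (hs : 2 ≤ s) :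
    Integrable fun x : ℝ => √(1 + x ^ 2) ^ (-s) :=
  integrable_inv_one_add_sq.mono' (by fun_prop : Measurable _).aestronglyMeasurable
    (ae_of_all _ fun x => by
      rw [norm_of_nonneg (by positivity)]; exact sqrt_one_add_sq_rpow_neg_le_inv hs x)

theorem integral_sqrt_one_add_sq_rpow_neg_le_pi {s : ℝ} (hs : 2 ≤ s) :
    ∫ x : ℝ, √(1 + x ^ 2) ^ (-s) ≤ π :=
  (integral_mono (integrable_sqrt_one_add_sq_rpow_neg hs) integrable_inv_one_add_sq
    (sqrt_one_add_sq_rpow_neg_le_inv hs)).trans_eq integral_univ_inv_one_add_sq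

section Decay

variable {F : Type*} [NormedAddCommGroup F] {g : ℝ → F} {C s : ℝ}

theorem integrable_of_norm_le_mul_sqrt_one_add_sq_rpow_neg (hs : 2 ≤ s)
    (hg : AEStronglyMeasurable g) (hgb : ∀ x, ‖g x‖ ≤ C * √(1 + x ^ 2) ^ (-s)) : Integrable g :=
  ((integrable_sqrt_one_add_sq_rpow_neg hs).const_mul C).mono' hg (ae_of_all _ hgb)

theorem integral_norm_le_mul_pi_of_norm_le (hs : 2 ≤ s)
    (hg : AEStronglyMeasurable g) (hgb : ∀ x, ‖g x‖ ≤ C * √(1 + x ^ 2) ^ (-s)) :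
    ∫ x, ‖g x‖ ≤ C * π := by
  have hC : 0 ≤ C := by simpa using (norm_nonneg _).trans (hgb 0)
  calc ∫ x, ‖g x‖ ≤ ∫ x, C * √(1 + x ^ 2) ^ (-s) :=
        integral_mono (integrable_of_norm_le_mul_sqrt_one_add_sq_rpow_neg hs hg hgb).norm
          ((integrable_sqrt_one_add_sq_rpow_neg hs).const_mul C) hgb
    _ ≤ C * π := by
        rw [integral_const_mul]
        exact mul_le_mul_of_nonneg_left (integral_sqrt_one_add_sq_rpow_neg_le_pi hs) hC

end Decay

section LinearODE

variable {𝕜 E : Type*} [NontriviallyNormedField 𝕜] [NormedAddCommGroup E] [InnerProductSpace ℝ E]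
  [NormedSpace 𝕜 E] {M : ℝ → E →L[𝕜] E} {c : ℝ → E}

theorem norm_le_exp_integral_norm_mul_norm_zero (hM : Continuous M)
    (hMi : Integrable fun x => ‖M x‖) (hc : ∀ x, HasDerivAt c (M x (c x)) x) (x : ℝ) :
    ‖c x‖ ≤ exp (∫ y, ‖M y‖) * ‖c 0‖ := by
  have hbound : ∀ t, ‖M t (c t)‖ ≤ ‖M t‖ * ‖c t‖ := fun t => (M t).le_opNorm (c t)
  have hsub : ∀ {a b : ℝ}, a ≤ b → ∫ t in a..b, ‖M t‖ ≤ ∫ t, ‖M t‖ := fun hab => by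
    rw [intervalIntegral.integral_of_le hab]
    exact setIntegral_le_integral hMi (ae_of_all _ fun _ => norm_nonneg _)
  rcases le_total 0 x with hx | hx
  · refine (norm_le_exp_integral_mul_of_le hM.norm hc hbound hx).trans ?_
    gcongr; exact hsub hx
  · refine (norm_le_exp_integral_mul_of_ge hM.norm hc hbound hx).trans ?_
    gcongr; exact hsub hx

theorem exists_tendsto_atTop_norm_sub_le_of_norm_le [CompleteSpace E] {C ν : ℝ} (hν : 0 ≤ ν)
    (hM : Continuous M) (hMb : ∀ x, ‖M x‖ ≤ C * √(1 + x ^ 2) ^ (-(2 + ν)))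
    (hc : ∀ x, HasDerivAt c (M x (c x)) x) :
    ∃ L, Tendsto c atTop (𝓝 L) ∧ ∀ x, 0 ≤ x →
      ‖c x - L‖ ≤
        C * exp (C * π) * ‖c 0‖ * (√2 ^ (2 + ν) / (1 + ν)) * √(1 + x ^ 2) ^ (-(1 + ν)) := by
  have hs : 2 ≤ 2 + ν := by linarith
  have hC : 0 ≤ C := by simpa using (norm_nonneg _).trans (hMb 0)
  have hMi := integrable_of_norm_le_mul_sqrt_one_add_sq_rpow_neg hs hM.aestronglyMeasurable hMb
  have hcB : ∀ t, ‖c t‖ ≤ exp (C * π) * ‖c 0‖ := fun t =>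
    (norm_le_exp_integral_norm_mul_norm_zero hM hMi.norm hc t).trans
      (by gcongr; exact integral_norm_le_mul_pi_of_norm_le hs hM.aestronglyMeasurable hMb)
  set K := C * exp (C * π) * ‖c 0‖
  have hfb : ∀ t, ‖M t (c t)‖ ≤ K * √(1 + t ^ 2) ^ (-(2 + ν)) := fun t => calc
    ‖M t (c t)‖ ≤ ‖M t‖ * ‖c t‖ := (M t).le_opNorm (c t)
    _ ≤ C * √(1 + t ^ 2) ^ (-(2 + ν)) * (exp (C * π) * ‖c 0‖) :=
      mul_le_mul (hMb t) (hcB t) (norm_nonneg _) (by positivity)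
    _ = K * √(1 + t ^ 2) ^ (-(2 + ν)) := by ring
  have hfi := integrable_of_norm_le_mul_sqrt_one_add_sq_rpow_neg hs
    (hM.clm_apply (continuous_iff_continuousAt.2 fun t => (hc t).continuousAt)).aestronglyMeasurable
    hfb
  obtain ⟨L, hL, hLx⟩ :=
    exists_tendsto_atTop_norm_sub_le_integral_Ioi hc (hfi.integrableOn (s := Ioi 0))
  refine ⟨L, hL, fun x hx => (hLx x hx).trans ?_⟩
  calc ∫ t in Ioi x, ‖M t (c t)‖ ≤ ∫ t in Ioi x, K * √(1 + t ^ 2) ^ (-(2 + ν)) :=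
        setIntegral_mono hfi.norm.integrableOn
          ((integrable_sqrt_one_add_sq_rpow_neg hs).const_mul K).integrableOn hfb
    _ ≤ K * (√2 ^ (2 + ν) / (1 + ν) * √(1 + x ^ 2) ^ (-(1 + ν))) := by
        rw [integral_const_mul]
        gcongr
        exact integral_Ioi_sqrt_one_add_sq_rpow_neg_le (by linarith) hx
    _ = K * (√2 ^ (2 + ν) / (1 + ν)) * √(1 + x ^ 2) ^ (-(1 + ν)) := by ring

end LinearODE

theorem stmt_3_general (C ν b : ℝ) (hν : 0 < ν) :
    ∃ C' : ℝ,
      ∀ (n : ℕ)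
        (M : ℝ → (EuclideanSpace ℂ (Fin n) →L[ℂ] EuclideanSpace ℂ (Fin n)))
        (c : ℝ → EuclideanSpace ℂ (Fin n)),
        Continuous M →
        (∀ x : ℝ, ‖M x‖ ≤ C * Real.sqrt (1 + x ^ 2) ^ (-(2 + ν))) →
        (∀ x : ℝ, HasDerivAt c ((M x) (c x)) x) →
        ‖c 0‖ = b →
        (∀ x : ℝ, ‖c x‖ ≤ Real.exp (∫ y : ℝ, ‖M y‖) * ‖c 0‖) ∧
        ∃ cplus cminus : EuclideanSpace ℂ (Fin n),
          Tendsto c atTop (nhds cplus) ∧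
          Tendsto c atBot (nhds cminus) ∧
          (∀ x : ℝ, 0 ≤ x → ‖c x - cplus‖ ≤ C' * Real.sqrt (1 + x ^ 2) ^ (-(1 + ν))) ∧
          (∀ x : ℝ, x ≤ 0 → ‖c x - cminus‖ ≤ C' * Real.sqrt (1 + x ^ 2) ^ (-(1 + ν))) := by
  refine ⟨C * exp (C * π) * b * (√2 ^ (2 + ν) / (1 + ν)), fun n M c hM hMb hc hc0 => ?_⟩
  subst hc0
  have hMb_neg : ∀ x, ‖-M (-x)‖ ≤ C * √(1 + x ^ 2) ^ (-(2 + ν)) := fun x => by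
    simpa using hMb (-x)
  obtain ⟨cplus, hplus, hplus_rate⟩ :=
    exists_tendsto_atTop_norm_sub_le_of_norm_le hν.le hM hMb hc
  obtain ⟨cminus, hminus, hminus_rate⟩ := exists_tendsto_atTop_norm_sub_le_of_norm_le hν.le
    (hM.comp continuous_neg).neg hMb_neg fun x => (hc (-x)).comp_neg
  refine ⟨norm_le_exp_integral_norm_mul_norm_zero hM
      (integrable_of_norm_le_mul_sqrt_one_add_sq_rpow_neg (by linarith) hM.aestronglyMeasurable
        hMb).norm hc,
    cplus, cminus, hplus, ?_, hplus_rate, fun x hx => ?_⟩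
  · simpa [Function.comp_def] using hminus.comp tendsto_neg_atBot_atTop
  · simpa using hminus_rate (-x) (by linarith)

/-- Let `n ∈ ℕ`, `ν > 0`, `C > 0`, and let `M : ℝ → (ℂⁿ →L ℂⁿ)` be continuous with
`‖M x‖ ≤ C⟨x⟩^{-(2+ν)}` (operator norm). Let `c : ℝ → ℂⁿ` be differentiable with
`c′(x) = M(x) c(x)`. Then
(i) `‖c x‖ ≤ exp(∫ ‖M‖) ‖c 0‖` for all `x`;
(ii) the limits `c(±∞)` exist; and
(iii) there is `C′` depending only on `C, ν, ‖c 0‖` with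
`‖c x − c(+∞)‖ ≤ C′⟨x⟩^{-(1+ν)}` for `x ≥ 0` and `‖c x − c(−∞)‖ ≤ C′⟨x⟩^{-(1+ν)}`
for `x ≤ 0`. -/
theorem stmt_3 (C ν b : ℝ) (hC : 0 < C) (hν : 0 < ν) (hb : 0 ≤ b) :
    ∃ C' : ℝ,
      ∀ (n : ℕ)
        (M : ℝ → (EuclideanSpace ℂ (Fin n) →L[ℂ] EuclideanSpace ℂ (Fin n)))
        (c : ℝ → EuclideanSpace ℂ (Fin n)),
        Continuous M →
        (∀ x : ℝ, ‖M x‖ ≤ C * Real.sqrt (1 + x ^ 2) ^ (-(2 + ν))) →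
        (∀ x : ℝ, HasDerivAt c ((M x) (c x)) x) →
        ‖c 0‖ = b →
        (∀ x : ℝ, ‖c x‖ ≤ Real.exp (∫ y : ℝ, ‖M y‖) * ‖c 0‖) ∧
        ∃ cplus cminus : EuclideanSpace ℂ (Fin n),
          Tendsto c atTop (nhds cplus) ∧
          Tendsto c atBot (nhds cminus) ∧
          (∀ x : ℝ, 0 ≤ x → ‖c x - cplus‖ ≤ C' * Real.sqrt (1 + x ^ 2) ^ (-(1 + ν))) ∧
          (∀ x : ℝ, x ≤ 0 → ‖c x - cminus‖ ≤ C' * Real.sqrt (1 + x ^ 2) ^ (-(1 + ν))) :=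
  stmt_3_general C ν b hν
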